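/- For any two mixtures π, π' ∈ Δ(Δ(Y)), the Wasserstein distance between their k-th-order projections lower-bounds the Wasserstein distance between the mixtures: W₁(proj_k π, proj_k π') ≤ W₁(π, π'). -/

import Mathlib

open MeasureTheory

/-- 1-Wasserstein distance wrt a cost `d`, as the infimum of the expected cost
over all couplings. -/
noncomputable def W1 {α : Type*} [MeasurableSpace α] (d : α → α → ℝ)
    (μ ν : Measure α) : ℝ :=
  sInf {c | ∃ γ : Measure (α × α),
    γ.map Prod.fst = μ ∧ γ.map Prod.snd = ν ∧ c = ∫ q, d q.1 q.2 ∂γ}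

/-- ℓ1 distance between two points of the simplex (as vectors). -/
noncomputable def l1dist {Y : Type*} [Fintype Y] (p q : Y → ℝ) : ℝ :=
  ∑ y, |p y - q y|

/-- The measure on `Y` corresponding to a probability vector `p : Y → ℝ`. -/
noncomputable def measOf {Y : Type*} [Fintype Y] [MeasurableSpace Y] (p : Y → ℝ) :
    Measure Y :=
  ∑ y, ENNReal.ofReal (p y) • Measure.dirac y

/-- The empirical distribution (normalized histogram) of a `k`-tuple of labels. -/
noncomputable def emp {Y : Type*} [Fintype Y] [DecidableEq Y] (k : ℕ)
    (ys : Fin k → Y) : Y → ℝ :=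
  fun j => ((Finset.univ.filter fun i => ys i = j).card : ℝ) / k

/-- The `k`-th order projection of a mixture `π ∈ Δ(Δ(Y))`: draw `p ~ π`, draw `k`
i.i.d. labels from `p`, and output their empirical distribution. -/
noncomputable def projk {Y : Type*} [Fintype Y] [DecidableEq Y] [MeasurableSpace Y]
    [MeasurableSingletonClass Y] (k : ℕ) (π : Measure (Y → ℝ)) : Measure (Y → ℝ) :=
  π.bind fun p => (Measure.pi fun _ : Fin k => measOf p).map (emp k)

open MeasureTheory Finset
open scoped ENNReal

section
variable {Z : Type*} [MeasurableSpace Z] [MeasurableSingletonClass Z] [Finite Z]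

lemma measSet_all (s : Set Z) : MeasurableSet s := s.toFinite.measurableSet

lemma meas_all {W : Type*} [MeasurableSpace W] (f : Z → W) : Measurable f :=
  fun s _ => measSet_all _
end

section disc
variable {ι β γ : Type*} [Fintype ι] [MeasurableSpace β] [MeasurableSpace γ]

lemma disc_apply (w : ι → ℝ≥0∞) (a : ι → β) {s : Set β} (hs : MeasurableSet s) :
    (∑ x : ι, w x • Measure.dirac (a x)) s = ∑ x : ι, w x * s.indicator 1 (a x) := by
  rw [Measure.finset_sum_apply]
  simp_rw [Measure.smul_apply, Measure.dirac_apply' _ hs, smul_eq_mul]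

lemma disc_map (w : ι → ℝ≥0∞) (a : ι → β) {f : β → γ} (hf : Measurable f) :
    (∑ x : ι, w x • Measure.dirac (a x)).map f = ∑ x : ι, w x • Measure.dirac (f (a x)) := by
  ext s hs
  rw [Measure.map_apply hf hs, disc_apply _ _ (hf hs), disc_apply _ _ hs]
  exact Finset.sum_congr rfl fun x _ => rfl

lemma disc_lintegral (w : ι → ℝ≥0∞) (a : ι → β) {f : β → ℝ≥0∞} (hf : Measurable f) :
    ∫⁻ x, f x ∂(∑ x : ι, w x • Measure.dirac (a x)) = ∑ x : ι, w x * f (a x) := by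
  rw [lintegral_finset_sum_measure]
  simp_rw [lintegral_smul_measure, lintegral_dirac' _ hf, smul_eq_mul]
end disc

section binds
variable {α β γ : Type*} [MeasurableSpace α] [MeasurableSpace β] [MeasurableSpace γ]

lemma my_map_bind (μ : Measure α) {κ : α → Measure β} (hκ : Measurable κ)
    {f : β → γ} (hf : Measurable f) :
    (μ.bind κ).map f = μ.bind (fun a => (κ a).map f) := by
  rw [Measure.bind, Measure.bind, ← Measure.join_map_map hf, Measure.map_map
    (Measure.measurable_map f hf) hκ]
  rfl

lemma my_bind_map (μ : Measure α) {g : α → β} (hg : Measurable g)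
    {κ : β → Measure γ} (hκ : Measurable κ) :
    (μ.map g).bind κ = μ.bind (κ ∘ g) := by
  rw [Measure.bind, Measure.bind, Measure.map_map hκ hg]

lemma my_bind_congr_ae (μ : Measure α) {κ κ' : α → Measure β}
    (hκ : Measurable κ) (hκ' : Measurable κ') (h : κ =ᵐ[μ] κ') :
    μ.bind κ = μ.bind κ' := by
  ext s hs
  rw [Measure.bind_apply hs hκ.aemeasurable, Measure.bind_apply hs hκ'.aemeasurable]
  exact lintegral_congr_ae (h.mono fun a ha => by simp only [ha])
end binds

section Yfacts
open Finset
variable {Y : Type*} [Fintype Y] [DecidableEq Y] [MeasurableSpace Y] [MeasurableSingletonClass Y]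

lemma measOf_apply (p : Y → ℝ) (s : Set Y) :
    measOf p s = ∑ y : Y, ENNReal.ofReal (p y) * s.indicator 1 y :=
  disc_apply _ _ (measSet_all s)

instance measOf_fin (p : Y → ℝ) : IsFiniteMeasure (measOf p) := by
  constructor
  rw [measOf_apply]
  exact lt_of_le_of_lt (Finset.sum_le_sum fun y _ => by
    simp [Set.indicator_apply] : _ ≤ ∑ _y : Y, ENNReal.ofReal (p _y)) (by
      exact ENNReal.sum_lt_top.2 fun y _ => ENNReal.ofReal_lt_top)

lemma pi_measOf (k : ℕ) (p : Y → ℝ) :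
    (Measure.pi fun _ : Fin k => measOf p)
      = ∑ ys : Fin k → Y, (∏ i, ENNReal.ofReal (p (ys i))) • Measure.dirac ys := by
  refine Measure.pi_eq fun s hs => ?_
  rw [disc_apply _ _ (MeasurableSet.univ_pi fun i => hs i)]
  simp_rw [measOf_apply]
  rw [Finset.prod_univ_sum]
  rw [Fintype.piFinset_univ]
  refine Finset.sum_congr rfl fun x _ => ?_
  rw [Finset.prod_mul_distrib]
  congr 1
  by_cases h : x ∈ Set.univ.pi s
  · rw [Set.indicator_of_mem h]
    exact (Finset.prod_eq_one fun i _ => Set.indicator_of_mem (h i (Set.mem_univ i)) _).symm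
  · obtain ⟨i, hi⟩ : ∃ i, x i ∉ s i := by simpa [Set.mem_univ_pi] using h
    rw [Set.indicator_of_notMem h]
    exact (Finset.prod_eq_zero (Finset.mem_univ i) (Set.indicator_of_notMem hi _)).symm
end Yfacts

section CW
open Finset
variable {Y : Type*} [Fintype Y] [DecidableEq Y]

/-- TV-optimal coupling weights of two probability vectors. -/
noncomputable def cw (p p' : Y → ℝ) (z : Y × Y) : ℝ :=
  (if z.1 = z.2 then min (p z.1) (p' z.1) else 0) +
  (p z.1 - min (p z.1) (p' z.1)) * (p' z.2 - min (p z.2) (p' z.2)) /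
    (∑ y, (p y - min (p y) (p' y)))

lemma stdSimplex_def (p : Y → ℝ) (hp : p ∈ stdSimplex ℝ Y) :
    (∀ y, 0 ≤ p y) ∧ ∑ y, p y = 1 := hp

variable {p p' : Y → ℝ} (hp : p ∈ stdSimplex ℝ Y) (hp' : p' ∈ stdSimplex ℝ Y)
include hp hp'

lemma cw_nonneg (z : Y × Y) : 0 ≤ cw p p' z := by
  unfold cw
  have h1 : (0:ℝ) ≤ if z.1 = z.2 then min (p z.1) (p' z.1) else 0 := by
    split_ifs
    · exact le_min (hp.1 _) (hp'.1 _)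
    · exact le_refl 0
  refine add_nonneg h1 (div_nonneg (mul_nonneg ?_ ?_) ?_)
  · exact sub_nonneg.2 (min_le_left _ _)
  · exact sub_nonneg.2 (min_le_right _ _)
  · exact Finset.sum_nonneg fun y _ => sub_nonneg.2 (min_le_left _ _)

lemma sum_ab : ∑ y, (p y - min (p y) (p' y)) = ∑ y, (p' y - min (p y) (p' y)) := by
  rw [Finset.sum_sub_distrib, Finset.sum_sub_distrib, hp.2, hp'.2]

lemma s_nonneg : 0 ≤ ∑ y, (p y - min (p y) (p' y)) :=
  Finset.sum_nonneg fun y _ => sub_nonneg.2 (min_le_left _ _)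

lemma cw_sum_right (y : Y) : ∑ y', cw p p' (y, y') = p y := by
  unfold cw
  simp only
  rw [Finset.sum_add_distrib, Finset.sum_ite_eq, if_pos (Finset.mem_univ y)]
  set s := ∑ y, (p y - min (p y) (p' y)) with hs
  rw [← Finset.sum_div, ← Finset.mul_sum, ← sum_ab hp hp', ← hs]
  rcases eq_or_ne s 0 with h0 | h0
  · have ha : p y - min (p y) (p' y) = 0 := by
      have := (Finset.sum_eq_zero_iff_of_nonneg
        (fun y _ => sub_nonneg.2 (min_le_left (p y) (p' y)))).1 h0 y (Finset.mem_univ y)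
      exact this
    rw [h0, div_zero, add_zero]
    linarith [ha]
  · rw [mul_div_assoc, div_self h0, mul_one]
    ring

lemma cw_sum_left (y' : Y) : ∑ y, cw p p' (y, y') = p' y' := by
  unfold cw
  simp only
  rw [Finset.sum_add_distrib, Finset.sum_ite_eq', if_pos (Finset.mem_univ y')]
  set s := ∑ y, (p y - min (p y) (p' y)) with hs
  rw [← Finset.sum_div, ← Finset.sum_mul, ← hs]
  rcases eq_or_ne s 0 with h0 | h0
  · have hb : p' y' - min (p y') (p' y') = 0 := by
      have h0' : ∑ y, (p' y - min (p y) (p' y)) = 0 := by rw [← sum_ab hp hp']; exact h0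
      exact (Finset.sum_eq_zero_iff_of_nonneg
        (fun y _ => sub_nonneg.2 (min_le_right (p y) (p' y)))).1 h0' y' (Finset.mem_univ y')
    rw [h0, div_zero, add_zero]
    linarith [hb]
  · rw [mul_comm, mul_div_assoc, div_self h0, mul_one]
    ring

lemma cw_total : ∑ z : Y × Y, cw p p' z = 1 := by
  rw [Fintype.sum_prod_type]
  simp_rw [cw_sum_right hp hp']
  exact hp.2

omit hp hp' in
lemma l1dist_nonneg' (q q' : Y → ℝ) : 0 ≤ l1dist q q' :=
  Finset.sum_nonneg fun y _ => abs_nonneg _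

lemma l1dist_eq_two_s : l1dist p p' = 2 * ∑ y, (p y - min (p y) (p' y)) := by
  have hmin : ∑ y, (p y - min (p y) (p' y)) = 1 - ∑ y, min (p y) (p' y) := by
    rw [Finset.sum_sub_distrib, hp.2]
  unfold l1dist
  have habs : ∀ y, |p y - p' y| = p y + p' y - 2 * min (p y) (p' y) := by
    intro y
    rcases le_total (p y) (p' y) with h | h
    · rw [abs_of_nonpos (by linarith), min_eq_left h]; ring
    · rw [abs_of_nonneg (by linarith), min_eq_right h]; ring
  simp_rw [habs]
  rw [Finset.sum_sub_distrib, Finset.sum_add_distrib, hp.2, hp'.2, ← Finset.mul_sum, hmin]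
  ring

lemma l1dist_le_two : l1dist p p' ≤ 2 := by
  unfold l1dist
  calc ∑ y, |p y - p' y| ≤ ∑ y, (p y + p' y) := by
        refine Finset.sum_le_sum fun y _ => ?_
        rw [abs_sub_le_iff]
        constructor <;> nlinarith [hp.1 y, hp'.1 y]
    _ = 2 := by rw [Finset.sum_add_distrib, hp.2, hp'.2]; norm_num

lemma cw_offdiag :
    ∑ z ∈ Finset.univ.filter (fun z : Y × Y => z.1 ≠ z.2), cw p p' z
      ≤ l1dist p p' / 2 := by
  set s := ∑ y, (p y - min (p y) (p' y)) with hs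
  have hsnn : 0 ≤ s := s_nonneg hp hp'
  have h1 : ∀ z ∈ Finset.univ.filter (fun z : Y × Y => z.1 ≠ z.2),
      cw p p' z = (p z.1 - min (p z.1) (p' z.1)) * (p' z.2 - min (p z.2) (p' z.2)) / s := by
    intro z hz
    rw [Finset.mem_filter] at hz
    unfold cw
    rw [if_neg hz.2, zero_add, ← hs]
  rw [Finset.sum_congr rfl h1]
  have h2 : ∑ z ∈ Finset.univ.filter (fun z : Y × Y => z.1 ≠ z.2),
        (p z.1 - min (p z.1) (p' z.1)) * (p' z.2 - min (p z.2) (p' z.2)) / s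
      ≤ ∑ z : Y × Y, (p z.1 - min (p z.1) (p' z.1)) * (p' z.2 - min (p z.2) (p' z.2)) / s := by
    refine Finset.sum_le_sum_of_subset_of_nonneg (Finset.filter_subset _ _) fun z _ _ => ?_
    exact div_nonneg (mul_nonneg (sub_nonneg.2 (min_le_left _ _))
      (sub_nonneg.2 (min_le_right _ _))) hsnn
  refine h2.trans ?_
  have h3 : ∑ z : Y × Y, (p z.1 - min (p z.1) (p' z.1)) * (p' z.2 - min (p z.2) (p' z.2)) / s
      = s * s / s := by
    rw [Fintype.sum_prod_type]
    simp_rw [← Finset.sum_div, ← Finset.mul_sum, ← sum_ab hp hp', ← hs, ← Finset.sum_mul]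
    rw [← hs]
  rw [h3, l1dist_eq_two_s hp hp', ← hs]
  rcases eq_or_ne s 0 with h0 | h0
  · rw [h0]; norm_num
  · rw [mul_div_assoc, div_self h0, mul_one]
    linarith

end CW

section Emp
open Finset
variable {Y : Type*} [Fintype Y] [DecidableEq Y]

lemma emp_l1_le (k : ℕ) (hk : 0 < k) (a b : Fin k → Y) :
    l1dist (emp k a) (emp k b)
      ≤ 2 / k * ((Finset.univ.filter fun i => a i ≠ b i).card : ℝ) := by
  classical
  set D := Finset.univ.filter fun i => a i ≠ b i with hD
  have key : ∀ j : Y,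
      |((Finset.univ.filter fun i => a i = j).card : ℝ)
          - ((Finset.univ.filter fun i => b i = j).card : ℝ)|
        ≤ ((D.filter fun i => a i = j).card : ℝ) + ((D.filter fun i => b i = j).card : ℝ) := by
    intro j
    have hA := Finset.card_filter_add_card_filter_not
      (s := Finset.univ.filter fun i => a i = j) (p := fun i => a i = b i)
    have hB := Finset.card_filter_add_card_filter_not
      (s := Finset.univ.filter fun i => b i = j) (p := fun i => a i = b i)
    have e0 : (Finset.univ.filter fun i => a i = j).filter (fun i => a i = b i)
        = (Finset.univ.filter fun i => b i = j).filter (fun i => a i = b i) := by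
      ext i
      simp only [Finset.mem_filter, Finset.mem_univ, true_and]
      constructor
      · rintro ⟨h1, h2⟩; exact ⟨h2 ▸ h1, h2⟩
      · rintro ⟨h1, h2⟩; exact ⟨h2.trans h1, h2⟩
    have e1 : (Finset.univ.filter fun i => a i = j).filter (fun i => ¬ a i = b i)
        = D.filter fun i => a i = j := by
      ext i
      simp only [hD, Finset.mem_filter, Finset.mem_univ, true_and, ne_eq]
      tauto
    have e2 : (Finset.univ.filter fun i => b i = j).filter (fun i => ¬ a i = b i)
        = D.filter fun i => b i = j := by
      ext i
      simp only [hD, Finset.mem_filter, Finset.mem_univ, true_and, ne_eq]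
      tauto
    rw [e0, e1] at hA
    rw [e2] at hB
    have hA' : ((Finset.univ.filter fun i => a i = j).card : ℝ)
        = (((Finset.univ.filter fun i => b i = j).filter (fun i => a i = b i)).card : ℝ)
          + ((D.filter fun i => a i = j).card : ℝ) := by exact_mod_cast hA.symm
    have hB' : ((Finset.univ.filter fun i => b i = j).card : ℝ)
        = (((Finset.univ.filter fun i => b i = j).filter (fun i => a i = b i)).card : ℝ)
          + ((D.filter fun i => b i = j).card : ℝ) := by exact_mod_cast hB.symm
    have n1 : (0:ℝ) ≤ ((D.filter fun i => a i = j).card : ℝ) := Nat.cast_nonneg _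
    have n2 : (0:ℝ) ≤ ((D.filter fun i => b i = j).card : ℝ) := Nat.cast_nonneg _
    rw [abs_sub_le_iff]
    constructor <;> linarith
  have fibA : ∑ j : Y, ((D.filter fun i => a i = j).card : ℝ) = D.card := by
    have h := Finset.card_eq_sum_card_fiberwise
      (f := a) (t := Finset.univ) (s := D) (fun i _ => Finset.mem_univ (a i))
    rw [h, Nat.cast_sum]
  have fibB : ∑ j : Y, ((D.filter fun i => b i = j).card : ℝ) = D.card := by
    have h := Finset.card_eq_sum_card_fiberwise
      (f := b) (t := Finset.univ) (s := D) (fun i _ => Finset.mem_univ (b i))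
    rw [h, Nat.cast_sum]
  have hkR : (0:ℝ) < k := by exact_mod_cast hk
  have emp_eq : ∀ j, emp k a j - emp k b j
      = (((Finset.univ.filter fun i => a i = j).card : ℝ)
        - ((Finset.univ.filter fun i => b i = j).card : ℝ)) / k := by
    intro j
    unfold emp
    rw [div_sub_div_same]
  calc l1dist (emp k a) (emp k b)
      = ∑ j, |(((Finset.univ.filter fun i => a i = j).card : ℝ)
          - ((Finset.univ.filter fun i => b i = j).card : ℝ))| / k := by
        unfold l1dist
        refine Finset.sum_congr rfl fun j _ => ?_
        rw [emp_eq j, abs_div, abs_of_pos hkR]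
    _ ≤ ∑ j, (((D.filter fun i => a i = j).card : ℝ)
          + ((D.filter fun i => b i = j).card : ℝ)) / k := by
        refine Finset.sum_le_sum fun j _ => ?_
        exact (div_le_div_iff_of_pos_right hkR).mpr (key j)
    _ = 2 / k * D.card := by
        rw [← Finset.sum_div, Finset.sum_add_distrib, fibA, fibB]
        ring
end Emp

section Kernels
open Finset
variable {Y : Type*} [Fintype Y] [DecidableEq Y] [MeasurableSpace Y] [MeasurableSingletonClass Y]

noncomputable def Gk (k : ℕ) (p : Y → ℝ) : Measure (Y → ℝ) :=
  ∑ ys : Fin k → Y, (∏ i, ENNReal.ofReal (p (ys i))) • Measure.dirac (emp k ys)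

noncomputable def Kk (k : ℕ) (pp : (Y → ℝ) × (Y → ℝ)) : Measure ((Y → ℝ) × (Y → ℝ)) :=
  ∑ zs : Fin k → Y × Y, (∏ i, ENNReal.ofReal (cw pp.1 pp.2 (zs i))) •
    Measure.dirac (emp k (fun i => (zs i).1), emp k (fun i => (zs i).2))

lemma measurable_coord (y : Y) : Measurable fun pp : (Y → ℝ) × (Y → ℝ) => pp.1 y :=
  (measurable_pi_apply y).comp measurable_fst

lemma measurable_coord' (y : Y) : Measurable fun pp : (Y → ℝ) × (Y → ℝ) => pp.2 y :=
  (measurable_pi_apply y).comp measurable_snd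

lemma measurable_cw (z : Y × Y) :
    Measurable fun pp : (Y → ℝ) × (Y → ℝ) => cw pp.1 pp.2 z := by
  unfold cw
  have hmin : ∀ y : Y, Measurable fun pp : (Y → ℝ) × (Y → ℝ) => min (pp.1 y) (pp.2 y) :=
    fun y => (measurable_coord y).min (measurable_coord' y)
  have h1 : Measurable fun pp : (Y → ℝ) × (Y → ℝ) =>
      (if z.1 = z.2 then min (pp.1 z.1) (pp.2 z.1) else 0) := by
    rcases eq_or_ne z.1 z.2 with h | h
    · simp only [if_pos h]; exact hmin z.1
    · simp only [if_neg h]; exact measurable_const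
  refine h1.add (Measurable.div (Measurable.mul ?_ ?_) ?_)
  · exact (measurable_coord z.1).sub (hmin z.1)
  · exact (measurable_coord' z.2).sub (hmin z.2)
  · exact Finset.measurable_sum _ fun y _ => (measurable_coord y).sub (hmin y)

lemma measurable_Gk (k : ℕ) : Measurable (Gk (Y := Y) k) := by
  refine Measure.measurable_of_measurable_coe _ fun s hs => ?_
  simp only [Gk, disc_apply _ _ hs]
  refine Finset.measurable_sum _ fun ys _ => Measurable.mul ?_ measurable_const
  exact Finset.measurable_prod _ fun i _ =>
    ENNReal.measurable_ofReal.comp (measurable_pi_apply _)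

lemma measurable_Kk (k : ℕ) : Measurable (Kk (Y := Y) k) := by
  refine Measure.measurable_of_measurable_coe _ fun s hs => ?_
  simp only [Kk, disc_apply _ _ hs]
  refine Finset.measurable_sum _ fun zs _ => Measurable.mul ?_ measurable_const
  exact Finset.measurable_prod _ fun i _ =>
    ENNReal.measurable_ofReal.comp (measurable_cw (zs i))

lemma measurable_emp (k : ℕ) : Measurable (emp (Y := Y) k) := meas_all _

lemma Gk_rep (k : ℕ) (p : Y → ℝ) :
    (Measure.pi fun _ : Fin k => measOf p).map (emp k) = Gk k p := by
  rw [pi_measOf, disc_map _ _ (measurable_emp k)]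
  rfl

lemma projk_eq (k : ℕ) (π : Measure (Y → ℝ)) : projk k π = π.bind (Gk k) := by
  unfold projk
  congr 1
  funext p
  exact Gk_rep k p

variable {p p' : Y → ℝ} (hp : p ∈ stdSimplex ℝ Y) (hp' : p' ∈ stdSimplex ℝ Y)
include hp hp'

lemma Kk_fst (k : ℕ) : (Kk k (p, p')).map Prod.fst = Gk k p := by
  rw [Kk, disc_map _ _ measurable_fst]
  simp only
  rw [← Equiv.sum_comp (Equiv.arrowProdEquivProdArrow (Fin k) (fun _ => Y) (fun _ => Y)).symm
    (fun zs : Fin k → Y × Y => (∏ i, ENNReal.ofReal (cw p p' (zs i))) •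
      Measure.dirac (emp k fun i => (zs i).1)), Fintype.sum_prod_type]
  unfold Gk
  refine Finset.sum_congr rfl fun as _ => ?_
  have hcoord : ∀ (bs : Fin k → Y) (i : Fin k),
      (Equiv.arrowProdEquivProdArrow (Fin k) (fun _ => Y) (fun _ => Y)).symm (as, bs) i = (as i, bs i) := by
    intro bs i; rfl
  have : ∀ bs : Fin k → Y,
      (∏ i, ENNReal.ofReal (cw p p'
          ((Equiv.arrowProdEquivProdArrow (Fin k) (fun _ => Y) (fun _ => Y)).symm (as, bs) i))) •
        Measure.dirac (emp k fun i =>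
          ((Equiv.arrowProdEquivProdArrow (Fin k) (fun _ => Y) (fun _ => Y)).symm (as, bs) i).1)
      = (∏ i, ENNReal.ofReal (cw p p' (as i, bs i))) • Measure.dirac (emp k as) := by
    intro bs
    simp_rw [hcoord]
  rw [Finset.sum_congr rfl fun bs _ => this bs, ← Finset.sum_smul]
  congr 1
  have hps := Finset.prod_univ_sum (fun _ : Fin k => (Finset.univ : Finset Y))
    (fun i y => ENNReal.ofReal (cw p p' (as i, y)))
  rw [Fintype.piFinset_univ] at hps
  rw [← hps]
  refine Finset.prod_congr rfl fun i _ => ?_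
  rw [← ENNReal.ofReal_sum_of_nonneg fun y _ => cw_nonneg hp hp' (as i, y),
    cw_sum_right hp hp']

lemma Kk_snd (k : ℕ) : (Kk k (p, p')).map Prod.snd = Gk k p' := by
  rw [Kk, disc_map _ _ measurable_snd]
  simp only
  rw [← Equiv.sum_comp (Equiv.arrowProdEquivProdArrow (Fin k) (fun _ => Y) (fun _ => Y)).symm
    (fun zs : Fin k → Y × Y => (∏ i, ENNReal.ofReal (cw p p' (zs i))) •
      Measure.dirac (emp k fun i => (zs i).2)), Fintype.sum_prod_type]
  unfold Gk
  rw [Finset.sum_comm]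
  refine Finset.sum_congr rfl fun bs _ => ?_
  have : ∀ as : Fin k → Y,
      (∏ i, ENNReal.ofReal (cw p p'
          ((Equiv.arrowProdEquivProdArrow (Fin k) (fun _ => Y) (fun _ => Y)).symm (as, bs) i))) •
        Measure.dirac (emp k fun i =>
          ((Equiv.arrowProdEquivProdArrow (Fin k) (fun _ => Y) (fun _ => Y)).symm (as, bs) i).2)
      = (∏ i, ENNReal.ofReal (cw p p' (as i, bs i))) • Measure.dirac (emp k bs) := by
    intro as; rfl
  rw [Finset.sum_congr rfl fun as _ => this as, ← Finset.sum_smul]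
  congr 1
  have hps := Finset.prod_univ_sum (fun _ : Fin k => (Finset.univ : Finset Y))
    (fun i y => ENNReal.ofReal (cw p p' (y, bs i)))
  rw [Fintype.piFinset_univ] at hps
  rw [← hps]
  refine Finset.prod_congr rfl fun i _ => ?_
  rw [← ENNReal.ofReal_sum_of_nonneg fun y _ => cw_nonneg hp hp' (y, bs i),
    cw_sum_left hp hp']

omit hp hp' in
lemma measurable_l1 :
    Measurable fun q : (Y → ℝ) × (Y → ℝ) => ENNReal.ofReal (l1dist q.1 q.2) := by
  refine ENNReal.measurable_ofReal.comp ?_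
  unfold l1dist
  exact Finset.measurable_sum _ fun y _ =>
    ((measurable_coord y).sub (measurable_coord' y)).abs

lemma Kk_cost (k : ℕ) (hk : 0 < k) :
    ∫⁻ q, ENNReal.ofReal (l1dist q.1 q.2) ∂(Kk k (p, p'))
      ≤ ENNReal.ofReal (l1dist p p') := by
  rw [Kk, disc_lintegral _ _ measurable_l1]
  simp only
  set e : Y × Y → ℝ≥0∞ := fun z => ENNReal.ofReal (cw p p' z) with he
  set T : ℝ≥0∞ := ∑ z ∈ Finset.univ.filter (fun z : Y × Y => z.1 ≠ z.2), e z with hTdef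
  have hT : T ≤ ENNReal.ofReal (l1dist p p' / 2) := by
    rw [hTdef, he]
    rw [← ENNReal.ofReal_sum_of_nonneg fun z _ => cw_nonneg hp hp' z]
    exact ENNReal.ofReal_le_ofReal (cw_offdiag hp hp')
  have hS : ∑ z : Y × Y, e z = 1 := by
    rw [he, ← ENNReal.ofReal_sum_of_nonneg fun z _ => cw_nonneg hp hp' z, cw_total hp hp']
    exact ENNReal.ofReal_one
  have step1 : ∀ zs : Fin k → Y × Y,
      ENNReal.ofReal (l1dist (emp k fun i => (zs i).1) (emp k fun i => (zs i).2))
        ≤ ENNReal.ofReal (2 / k) *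
          ((Finset.univ.filter fun i => (zs i).1 ≠ (zs i).2).card : ℝ≥0∞) := by
    intro zs
    refine (ENNReal.ofReal_le_ofReal (emp_l1_le k hk _ _)).trans ?_
    rw [ENNReal.ofReal_mul (by positivity)]
    rw [ENNReal.ofReal_natCast]
  have cardeq : ∀ zs : Fin k → Y × Y,
      ((Finset.univ.filter fun i => (zs i).1 ≠ (zs i).2).card : ℝ≥0∞)
        = ∑ i, (if (zs i).1 ≠ (zs i).2 then (1:ℝ≥0∞) else 0) := by
    intro zs
    rw [Finset.card_filter]
    push_cast
    rfl
  have inner : ∀ i : Fin k, ∑ zs : Fin k → Y × Y,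
      (if (zs i).1 ≠ (zs i).2 then (1:ℝ≥0∞) else 0) * ∏ j, e (zs j) = T := by
    intro i
    have per_zs : ∀ zs : Fin k → Y × Y,
        (if (zs i).1 ≠ (zs i).2 then (1:ℝ≥0∞) else 0) * ∏ j, e (zs j)
          = ∏ j, (if j = i then (if (zs j).1 ≠ (zs j).2 then (1:ℝ≥0∞) else 0) * e (zs j)
              else e (zs j)) := by
      intro zs
      rw [← Finset.mul_prod_erase Finset.univ
        (fun j => if j = i then (if (zs j).1 ≠ (zs j).2 then (1:ℝ≥0∞) else 0) * e (zs j)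
          else e (zs j)) (Finset.mem_univ i)]
      rw [if_pos rfl]
      rw [Finset.prod_congr rfl fun j hj => if_neg (Finset.mem_erase.1 hj).1]
      rw [← Finset.mul_prod_erase Finset.univ (fun j => e (zs j)) (Finset.mem_univ i),
        ← mul_assoc]
    rw [Finset.sum_congr rfl fun zs _ => per_zs zs]
    have hps := Finset.prod_univ_sum (fun _ : Fin k => (Finset.univ : Finset (Y × Y)))
      (fun j z => if j = i then (if z.1 ≠ z.2 then (1:ℝ≥0∞) else 0) * e z else e z)
    rw [Fintype.piFinset_univ] at hps
    rw [← hps]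
    have inner2 : ∀ j : Fin k,
        (∑ z : Y × Y, if j = i then (if z.1 ≠ z.2 then (1:ℝ≥0∞) else 0) * e z else e z)
          = if j = i then T else 1 := by
      intro j
      rcases eq_or_ne j i with h | h
      · simp only [if_pos h, hTdef]
        rw [Finset.sum_filter]
        exact Finset.sum_congr rfl fun z _ => boole_mul _ _
      · simp only [if_neg h]
        exact hS
    rw [Finset.prod_congr rfl fun j _ => inner2 j, Finset.prod_ite_eq',
      if_pos (Finset.mem_univ i)]
  calc ∑ zs : Fin k → Y × Y, (∏ i, e (zs i)) *
        ENNReal.ofReal (l1dist (emp k fun i => (zs i).1) (emp k fun i => (zs i).2))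
      ≤ ∑ zs : Fin k → Y × Y, ENNReal.ofReal (2 / k) * ∑ i : Fin k,
          (if (zs i).1 ≠ (zs i).2 then (1:ℝ≥0∞) else 0) * ∏ j, e (zs j) := by
        refine Finset.sum_le_sum fun zs _ => ?_
        refine le_trans (mul_le_mul_right (step1 zs) _) (le_of_eq ?_)
        rw [cardeq zs, Finset.mul_sum, Finset.mul_sum, Finset.mul_sum]
        exact Finset.sum_congr rfl fun i _ => by ring
    _ = ENNReal.ofReal (2 / k) * ∑ i : Fin k, ∑ zs : Fin k → Y × Y,
          (if (zs i).1 ≠ (zs i).2 then (1:ℝ≥0∞) else 0) * ∏ j, e (zs j) := by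
        rw [← Finset.mul_sum, Finset.sum_comm]
    _ = ENNReal.ofReal (2 / k) * ∑ _i : Fin k, T := by
        rw [Finset.sum_congr rfl fun i _ => inner i]
    _ ≤ ENNReal.ofReal (2 / k) * ∑ _i : Fin k, ENNReal.ofReal (l1dist p p' / 2) := by
        exact mul_le_mul_right (Finset.sum_le_sum fun i _ => hT) _
    _ = ENNReal.ofReal (l1dist p p') := by
        have hk0 : (k:ℝ) ≠ 0 := ne_of_gt (by exact_mod_cast hk)
        rw [Finset.sum_const, Finset.card_univ, Fintype.card_fin, nsmul_eq_mul]
        rw [← ENNReal.ofReal_natCast k,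
          ← ENNReal.ofReal_mul (by positivity : (0:ℝ) ≤ (k:ℝ)),
          ← ENNReal.ofReal_mul (by positivity : (0:ℝ) ≤ 2/(k:ℝ))]
        congr 1
        field_simp

end Kernels

lemma measurableSet_stdSimplex' {Y : Type*} [Fintype Y] :
    MeasurableSet (stdSimplex ℝ Y) := by
  have : stdSimplex ℝ Y =
      (⋂ y, {f : Y → ℝ | 0 ≤ f y}) ∩ ((fun f : Y → ℝ => ∑ y, f y) ⁻¹' {1}) := by
    ext f
    simp only [stdSimplex, Set.mem_setOf_eq, Set.mem_inter_iff, Set.mem_iInter,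
      Set.mem_preimage, Set.mem_singleton_iff]
  rw [this]
  refine MeasurableSet.inter (MeasurableSet.iInter fun y => ?_) ?_
  · exact measurableSet_le measurable_const (measurable_pi_apply y)
  · exact (Finset.measurable_sum _ fun y _ => measurable_pi_apply y)
      (measurableSet_singleton 1)

/-- The Wasserstein distance between the `k`-th order projections of two mixtures
lower-bounds the Wasserstein distance between the mixtures themselves. -/
theorem stmt5 {Y : Type*} [Fintype Y] [DecidableEq Y] [MeasurableSpace Y]
    [MeasurableSingletonClass Y]
    (k : ℕ) (hk : 0 < k)
    (π π' : Measure (Y → ℝ)) [IsProbabilityMeasure π] [IsProbabilityMeasure π']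
    (hsupp : π (stdSimplex ℝ Y) = 1) (hsupp' : π' (stdSimplex ℝ Y) = 1) :
    W1 l1dist (projk k π) (projk k π') ≤ W1 l1dist π π' := by
  classical
  have hSmeas : MeasurableSet (stdSimplex ℝ Y) := measurableSet_stdSimplex'
  have hl1meas : Measurable fun q : (Y → ℝ) × (Y → ℝ) => l1dist q.1 q.2 := by
    unfold l1dist
    exact Finset.measurable_sum _ fun y _ =>
      ((measurable_coord y).sub (measurable_coord' y)).abs
  unfold W1
  refine le_csInf ⟨∫ q, l1dist q.1 q.2 ∂(π.prod π'), π.prod π', ?_, ?_, rfl⟩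
    fun c hc => ?_
  · rw [Measure.map_fst_prod, measure_univ, one_smul]
  · rw [Measure.map_snd_prod, measure_univ, one_smul]
  obtain ⟨γ, hγ1, hγ2, rfl⟩ := hc
  have hγuniv : γ Set.univ = 1 := by
    have := congrArg (fun m : Measure (Y → ℝ) => m Set.univ) hγ1
    simp only [Measure.map_apply measurable_fst MeasurableSet.univ, Set.preimage_univ,
      measure_univ] at this
    exact this
  have hγprob : IsProbabilityMeasure γ := ⟨hγuniv⟩
  -- a.e. membership in the simplex
  have hfst0 : γ (Prod.fst ⁻¹' (stdSimplex ℝ Y)ᶜ) = 0 := by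
    rw [← Measure.map_apply measurable_fst hSmeas.compl, hγ1,
      measure_compl hSmeas (measure_ne_top _ _), hsupp, measure_univ, tsub_self]
  have hsnd0 : γ (Prod.snd ⁻¹' (stdSimplex ℝ Y)ᶜ) = 0 := by
    rw [← Measure.map_apply measurable_snd hSmeas.compl, hγ2,
      measure_compl hSmeas (measure_ne_top _ _), hsupp', measure_univ, tsub_self]
  have haeS : ∀ᵐ pp ∂γ, pp.1 ∈ stdSimplex ℝ Y ∧ pp.2 ∈ stdSimplex ℝ Y := by
    rw [MeasureTheory.ae_iff]
    refine measure_mono_null (fun pp hpp => ?_) (measure_union_null hfst0 hsnd0)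
    simp only [Set.mem_setOf_eq, not_and_or] at hpp
    rcases hpp with h | h
    · exact Or.inl h
    · exact Or.inr h
  -- the coupling of the projections
  set Γ : Measure ((Y → ℝ) × (Y → ℝ)) := γ.bind (Kk k) with hΓ
  have hmKfst : Measurable fun pp : (Y → ℝ) × (Y → ℝ) => (Kk k pp).map Prod.fst :=
    (Measure.measurable_map _ measurable_fst).comp (measurable_Kk k)
  have hmKsnd : Measurable fun pp : (Y → ℝ) × (Y → ℝ) => (Kk k pp).map Prod.snd :=
    (Measure.measurable_map _ measurable_snd).comp (measurable_Kk k)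
  have hΓfst : Γ.map Prod.fst = projk k π := by
    rw [hΓ, my_map_bind γ (measurable_Kk k) measurable_fst]
    rw [my_bind_congr_ae γ hmKfst ((measurable_Gk k).comp measurable_fst)
      (haeS.mono fun pp h => Kk_fst h.1 h.2 k)]
    rw [← my_bind_map γ measurable_fst (measurable_Gk k), hγ1, ← projk_eq]
  have hΓsnd : Γ.map Prod.snd = projk k π' := by
    rw [hΓ, my_map_bind γ (measurable_Kk k) measurable_snd]
    rw [my_bind_congr_ae γ hmKsnd ((measurable_Gk k).comp measurable_snd)
      (haeS.mono fun pp h => Kk_snd h.1 h.2 k)]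
    rw [← my_bind_map γ measurable_snd (measurable_Gk k), hγ2, ← projk_eq]
  -- cost comparison
  set L : ℝ≥0∞ := ∫⁻ q, ENNReal.ofReal (l1dist q.1 q.2) ∂γ with hLdef
  have hLle : L ≤ 2 := by
    rw [hLdef]
    calc ∫⁻ q, ENNReal.ofReal (l1dist q.1 q.2) ∂γ
        ≤ ∫⁻ _, (2:ℝ≥0∞) ∂γ := by
          refine lintegral_mono_ae (haeS.mono fun pp h => ?_)
          refine (ENNReal.ofReal_le_ofReal (l1dist_le_two h.1 h.2)).trans ?_
          simp
      _ = 2 := by rw [lintegral_const, measure_univ, mul_one]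
  have hLne : L ≠ ⊤ := ne_top_of_le_ne_top (by norm_num) hLle
  have hbound : ∫⁻ q, ENNReal.ofReal (l1dist q.1 q.2) ∂Γ ≤ L := by
    rw [hΓ, Measure.lintegral_bind (measurable_Kk k).aemeasurable measurable_l1.aemeasurable, hLdef]
    refine lintegral_mono_ae (haeS.mono fun pp h => ?_)
    exact Kk_cost h.1 h.2 k hk
  have int_eq1 : ∫ q, l1dist q.1 q.2 ∂Γ
      = (∫⁻ q, ENNReal.ofReal (l1dist q.1 q.2) ∂Γ).toReal :=
    integral_eq_lintegral_of_nonneg_ae (Filter.Eventually.of_forall fun q =>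
      l1dist_nonneg' q.1 q.2) hl1meas.aestronglyMeasurable
  have int_eq2 : ∫ q, l1dist q.1 q.2 ∂γ = L.toReal :=
    integral_eq_lintegral_of_nonneg_ae (Filter.Eventually.of_forall fun q =>
      l1dist_nonneg' q.1 q.2) hl1meas.aestronglyMeasurable
  have hbdd : BddBelow {c | ∃ γ' : Measure (((Y → ℝ)) × ((Y → ℝ))),
      γ'.map Prod.fst = projk k π ∧ γ'.map Prod.snd = projk k π' ∧
      c = ∫ q, l1dist q.1 q.2 ∂γ'} := by
    refine ⟨0, fun c hc => ?_⟩
    obtain ⟨γ', _, _, rfl⟩ := hc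
    exact integral_nonneg fun q => l1dist_nonneg' q.1 q.2
  refine le_trans (csInf_le hbdd ⟨Γ, hΓfst, hΓsnd, rfl⟩) ?_
  rw [int_eq1, int_eq2]
  exact ENNReal.toReal_mono hLne hbound
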